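/- Let n ≥ 3 be odd and F a field, and for each m ∈ {0,...,n} let q_m := Σ_{i=0}^{m-1} (-1)^{i+m+1} e_i + Σ_{k=m+1}^{n} (-1)^{k+m} e_k ∈ F^{n+1}. Then for every even j with 0 ≤ j ≤ n-1 one has -e_j + q_j = -(e_{j+1} + q_{j+1}); in particular, the lines of PG(n,F) joining P_j = F·e_j to Q_j = F·q_j and joining P_{j+1} = F·e_{j+1} to Q_{j+1} = F·q_{j+1} meet in the point spanned by this common vector. -/
import Mathlib


/-- The vector `q_m = Σ_{i<m} (-1)^{i+m+1} e_i + Σ_{k>m} (-1)^{k+m} e_k`. -/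
def moebiusQ (F : Type*) [Field F] (n : ℕ) (m : Fin (n + 1)) : Fin (n + 1) → F :=
  (∑ i ∈ Finset.univ.filter (fun i : Fin (n + 1) => i < m),
      ((-1 : F) ^ ((i : ℕ) + (m : ℕ) + 1)) • (Pi.single i (1 : F) : Fin (n + 1) → F)) +
  (∑ k ∈ Finset.univ.filter (fun k : Fin (n + 1) => m < k),
      ((-1 : F) ^ ((k : ℕ) + (m : ℕ))) • (Pi.single k (1 : F) : Fin (n + 1) → F))

lemma moebiusQ_apply (F : Type*) [Field F] (n : ℕ) (m x : Fin (n + 1)) :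
    moebiusQ F n m x =
      if x < m then (-1 : F) ^ ((x : ℕ) + (m : ℕ) + 1)
      else if m < x then (-1 : F) ^ ((x : ℕ) + (m : ℕ)) else 0 := by
  unfold moebiusQ
  simp only [Pi.add_apply, Finset.sum_apply, Pi.smul_apply, Pi.single_apply, smul_eq_mul,
    mul_ite, mul_one, mul_zero, Finset.sum_ite_eq', Finset.mem_filter, Finset.mem_univ,
    true_and]
  rcases lt_trichotomy x m with h | h | h
  · simp [h, not_lt.2 h.le, asymm h]
  · simp [h, lt_irrefl]
  · simp [h, not_lt.2 h.le, asymm h]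

theorem stmt_10 (F : Type*) [Field F] (n : ℕ) (hn : 3 ≤ n) (hodd : Odd n)
    (j : ℕ) (hj : Even j) (hjn : j ≤ n - 1) :
    -(Pi.single (⟨j, by omega⟩ : Fin (n + 1)) (1 : F) : Fin (n + 1) → F)
        + moebiusQ F n ⟨j, by omega⟩ =
      -((Pi.single (⟨j + 1, by omega⟩ : Fin (n + 1)) (1 : F) : Fin (n + 1) → F)
        + moebiusQ F n ⟨j + 1, by omega⟩) ∧
    (-(Pi.single (⟨j, by omega⟩ : Fin (n + 1)) (1 : F) : Fin (n + 1) → F)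
        + moebiusQ F n ⟨j, by omega⟩) ∈
      Submodule.span F
        {(Pi.single (⟨j, by omega⟩ : Fin (n + 1)) (1 : F) : Fin (n + 1) → F),
          moebiusQ F n ⟨j, by omega⟩} ⊓
      Submodule.span F
        {(Pi.single (⟨j + 1, by omega⟩ : Fin (n + 1)) (1 : F) : Fin (n + 1) → F),
          moebiusQ F n ⟨j + 1, by omega⟩} := by
  have key : -(Pi.single (⟨j, by omega⟩ : Fin (n + 1)) (1 : F) : Fin (n + 1) → F)
        + moebiusQ F n ⟨j, by omega⟩ =
      -((Pi.single (⟨j + 1, by omega⟩ : Fin (n + 1)) (1 : F) : Fin (n + 1) → F)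
        + moebiusQ F n ⟨j + 1, by omega⟩) := by
    funext x
    obtain ⟨c, hc⟩ := x
    simp only [Pi.neg_apply, Pi.add_apply, Pi.single_apply, moebiusQ_apply,
      Fin.lt_def, Fin.mk.injEq, Fin.ext_iff]
    rcases lt_trichotomy c j with h | h | h
    · have h1 : c ≠ j := by omega
      have h2 : c ≠ j + 1 := by omega
      have h3 : c < j + 1 := by omega
      simp only [if_pos h, if_pos h3, if_neg h1, if_neg h2]
      have e1 : c + (j + 1) + 1 = (c + j + 1) + 1 := by omega
      rw [e1, pow_succ]
      ring
    · subst h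
      have h2 : c ≠ c + 1 := by omega
      simp only [if_pos rfl, if_neg (lt_irrefl c), if_neg h2,
        if_pos (Nat.lt_succ_self c)]
      have : (-1 : F) ^ (c + (c + 1) + 1) = 1 := by
        refine Even.neg_one_pow ⟨c + 1, by omega⟩
      simp [this]
    · have h1 : c ≠ j := by omega
      have h4 : ¬ c < j := by omega
      by_cases h2 : c = j + 1
      · subst h2
        simp only [if_neg h1, if_neg h4, if_pos h, if_pos rfl,
          if_neg (lt_irrefl (j + 1))]
        have : (-1 : F) ^ (j + 1 + j) = -1 := by
          refine Odd.neg_one_pow ⟨j, by omega⟩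
        simp [this]
      · have h5 : j + 1 < c := by omega
        have h6 : ¬ c < j + 1 := by omega
        simp only [if_neg h1, if_neg h4, if_pos h, if_neg h2, if_neg h6, if_pos h5]
        have e1 : c + (j + 1) = (c + j) + 1 := by omega
        rw [e1, pow_succ]
        ring
  refine ⟨key, ?_, ?_⟩
  · exact Submodule.add_mem _
      (Submodule.neg_mem _ (Submodule.subset_span (Set.mem_insert _ _)))
      (Submodule.subset_span (Set.mem_insert_of_mem _ rfl))
  · rw [key]
    exact Submodule.neg_mem _ (Submodule.add_mem _
      (Submodule.subset_span (Set.mem_insert _ _))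
      (Submodule.subset_span (Set.mem_insert_of_mem _ rfl)))
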